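/- arXiv:1905.11442 — 4 statements merged into one kernel-verified Lean document; each statement's English description precedes it below -/
import Mathlib

section
/- For α > 2, θ ≥ 0, and b ≥ 0, the substitution v = u^(-1/2)·c (change of variables) yields 2∫₀¹ (1 - 1/(1 + θ v^α)^b) v^(-3) dv = ∫₁^∞ (1 - 1/(1 + θ u^(-α/2))^b) du, and hence 1 + 2∫₀¹ (1 - (1 + θ v^α)^(-b)) v^(-3) dv = ₂F₁(b, -2/α; 1 - 2/α; -θ). -/
open MeasureTheory Real Set

/-- The Gauss hypergeometric function `₂F₁(b, -2/α; 1-2/α; -θ)`, characterized (as in the paper)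
via the integral identity `₂F₁(b,-2/α;1-2/α;-θ) = 1 + ∫₁^∞ (1 - (1+θh^(-α/2))^(-b)) dh`. -/
noncomputable def hyp2F1 (b α θ : ℝ) : ℝ :=
  1 + ∫ h in Set.Ioi (1:ℝ), (1 - (1 + θ * h ^ (-(α/2))) ^ (-b))

theorem rpow_image_Ioc_zero_one_of_neg {p : ℝ} (hp : p < 0) :
    (fun x : ℝ => x ^ p) '' Ioc 0 1 = Ici 1 := by
  ext y
  constructor
  · rintro ⟨x, ⟨hx₀, hx₁⟩, rfl⟩
    exact one_le_rpow_of_pos_of_le_one_of_nonpos hx₀ hx₁ hp.le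
  · intro hy
    have hy₀ : 0 < y := zero_lt_one.trans_le hy
    refine ⟨y ^ p⁻¹,
      ⟨rpow_pos_of_pos hy₀ _, rpow_le_one_of_one_le_of_nonpos hy (inv_nonpos.2 hp.le)⟩, ?_⟩
    simp [← rpow_mul hy₀.le, hp.ne]

theorem integral_comp_rpow_Ioc_zero_one_of_neg {E : Type*} [NormedAddCommGroup E]
    [NormedSpace ℝ E] (g : ℝ → E) {p : ℝ} (hp : p < 0) :
    ∫ x in Ioc 0 1, (|p| * x ^ (p - 1)) • g (x ^ p) = ∫ y in Ioi 1, g y := by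
  have hderiv : ∀ x ∈ Ioc (0 : ℝ) 1,
      HasDerivWithinAt (fun x : ℝ => x ^ p) (p * x ^ (p - 1)) (Ioc 0 1) x :=
    fun x hx => (hasDerivAt_rpow_const (Or.inl hx.1.ne')).hasDerivWithinAt
  have hinj : InjOn (fun x : ℝ => x ^ p) (Ioc 0 1) :=
    (rpow_left_injOn hp.ne).mono fun x hx => hx.1.le
  rw [← integral_Ici_eq_integral_Ioi, ← rpow_image_Ioc_zero_one_of_neg hp,
    integral_image_eq_integral_abs_deriv_smul measurableSet_Ioc hderiv hinj]
  refine setIntegral_congr_fun measurableSet_Ioc fun x hx => ?_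
  rw [abs_mul, abs_of_pos (rpow_pos_of_pos hx.1 _)]

theorem stmt_1_general (α θ b : ℝ) :
    (2 * ∫ v in Set.Ioc (0:ℝ) 1, (1 - (1 + θ * v ^ α) ^ (-b)) * v ^ (-(3:ℝ)))
        = (∫ u in Set.Ioi (1:ℝ), (1 - (1 + θ * u ^ (-(α/2))) ^ (-b))) ∧
    1 + 2 * ∫ v in Set.Ioc (0:ℝ) 1, (1 - (1 + θ * v ^ α) ^ (-b)) * v ^ (-(3:ℝ))
        = hyp2F1 b α θ := by
  have hsubst : (2 * ∫ v in Ioc (0:ℝ) 1, (1 - (1 + θ * v ^ α) ^ (-b)) * v ^ (-(3:ℝ)))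
      = ∫ u in Ioi (1:ℝ), (1 - (1 + θ * u ^ (-(α/2))) ^ (-b)) := by
    rw [← integral_comp_rpow_Ioc_zero_one_of_neg _ (by norm_num : (-2 : ℝ) < 0),
      ← integral_const_mul]
    refine setIntegral_congr_fun measurableSet_Ioc fun v hv => ?_
    have hpow : (v ^ (-2 : ℝ)) ^ (-(α / 2)) = v ^ α := by
      rw [← rpow_mul hv.1.le]
      ring_nf
    rw [smul_eq_mul, hpow]
    norm_num
    ring
  exact ⟨hsubst, by rw [hsubst, hyp2F1]⟩

theorem stmt_1 (α θ b : ℝ) (hα : 2 < α) (hθ : 0 ≤ θ) (hb : 0 ≤ b) :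
    (2 * ∫ v in Set.Ioc (0:ℝ) 1, (1 - (1 + θ * v ^ α) ^ (-b)) * v ^ (-(3:ℝ)))
        = (∫ u in Set.Ioi (1:ℝ), (1 - (1 + θ * u ^ (-(α/2))) ^ (-b))) ∧
    1 + 2 * ∫ v in Set.Ioc (0:ℝ) 1, (1 - (1 + θ * v ^ α) ^ (-b)) * v ^ (-(3:ℝ))
        = hyp2F1 b α θ :=
  stmt_1_general α θ b
end

section
/- Let α > 2, θ ≥ 0, b ≥ 0, and let c, λ > 0 be constants. Then ∫₀^∞ 2λπ r e^(-λπr²) · e^(-cπr²) · exp(-2λπ ∫_r^∞ (1 - (1 + θ(r/y)^α)^(-b)) y dy) dr = 1 / (c/λ + ₂F₁(b, -2/α; 1 - 2/α; -θ)). -/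
/-!
Substituting `y = r √h` in the inner integral turns it into `r² / 2 · (₂F₁ - 1)`, so the
whole integrand becomes `2λπ r e^{-K r²}` with `K = π (λ + c + λ (₂F₁ - 1))`, whose integral
over `(0, ∞)` is `λπ / K`. The substitution needs no integrability: the change-of-variables
formula holds for Bochner integrals unconditionally.
-/

open MeasureTheory Real Set

lemma one_sub_one_add_rpow_neg_nonneg {x b : ℝ} (hx : 0 ≤ x) (hb : 0 ≤ b) :
    0 ≤ 1 - (1 + x) ^ (-b) :=
  sub_nonneg.2 (rpow_le_one_of_one_le_of_nonpos (by linarith) (by linarith))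

lemma integral_Ioi_mul_exp_neg_mul_sq {K : ℝ} (hK : 0 < K) :
    ∫ x in Ioi (0:ℝ), x * exp (-(K * x ^ 2)) = (2 * K)⁻¹ := by
  have h := integral_comp_rpow_Ioi_of_pos (g := fun y => exp (-K * y)) two_pos
  rw [integral_exp_mul_Ioi (neg_lt_zero.2 hK)] at h
  norm_num [rpow_two, smul_eq_mul, mul_assoc, integral_const_mul] at h
  rw [mul_inv, ← h]
  ring

lemma integral_Ioi_comp_div_rpow_mul_self (G : ℝ → ℝ) (α : ℝ) {r : ℝ} (hr : 0 < r) :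
    ∫ y in Ioi r, G ((r / y) ^ α) * y = r ^ 2 / 2 * ∫ h in Ioi 1, G (h ^ (-(α / 2))) := by
  set J := ∫ x in Ioi 1, x * G (x ^ (-α))
  have scale := integral_comp_mul_left_Ioi (fun y => G ((r / y) ^ α) * y) 1 hr
  have scaled : ∫ x in Ioi 1, G ((r / (r * x)) ^ α) * (r * x) = r * J := by
    rw [← integral_const_mul]
    refine setIntegral_congr_fun measurableSet_Ioi fun x hx => ?_
    have hx : 0 < x := one_pos.trans hx
    rw [div_mul_cancel_left₀ hr.ne', inv_rpow hx.le, ← rpow_neg hx.le]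
    ring
  have square : ∫ h in Ioi 1, G (h ^ (-(α / 2))) = 2 * J := by
    rw [← integral_comp_rpow_Ioi_of_pos' (g := fun h => G (h ^ (-(α / 2)))) two_pos zero_le_one,
      one_rpow, ← integral_const_mul]
    refine setIntegral_congr_fun measurableSet_Ioi fun x hx => ?_
    have hx : 0 < x := one_pos.trans hx
    rw [smul_eq_mul, ← rpow_mul hx.le]
    norm_num
    ring_nf
  rw [scaled, mul_one, smul_eq_mul] at scale
  rw [square, ← mul_inv_cancel_left₀ hr.ne' (∫ y in Ioi r, G ((r / y) ^ α) * y), ← scale]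
  ring

theorem stmt_2_general (α θ b lam c : ℝ) (hθ : 0 ≤ θ) (hb : 0 ≤ b)
    (hlam : 0 < lam) (hc : 0 < c) :
    (∫ r in Set.Ioi (0:ℝ),
        2 * lam * π * r * Real.exp (-(lam * π * r ^ 2)) * Real.exp (-(c * π * r ^ 2)) *
          Real.exp (-(2 * lam * π *
            ∫ y in Set.Ioi r, (1 - (1 + θ * (r / y) ^ α) ^ (-b)) * y)))
      = 1 / (c / lam + hyp2F1 b α θ) := by
  set I := ∫ h in Ioi (1:ℝ), (1 - (1 + θ * h ^ (-(α / 2))) ^ (-b)) with hI_def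
  have hI : 0 ≤ I := setIntegral_nonneg measurableSet_Ioi fun h hh =>
    one_sub_one_add_rpow_neg_nonneg (mul_nonneg hθ (rpow_nonneg (one_pos.trans hh).le _)) hb
  have hK : 0 < (lam + c + lam * I) * π := by positivity
  have integrand : EqOn
      (fun r => 2 * lam * π * r * exp (-(lam * π * r ^ 2)) * exp (-(c * π * r ^ 2)) *
        exp (-(2 * lam * π * ∫ y in Ioi r, (1 - (1 + θ * (r / y) ^ α) ^ (-b)) * y)))
      (fun r => 2 * lam * π * (r * exp (-((lam + c + lam * I) * π * r ^ 2)))) (Ioi 0) :=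
    fun r hr => by
      dsimp only
      rw [integral_Ioi_comp_div_rpow_mul_self (fun x => 1 - (1 + θ * x) ^ (-b)) α hr, ← hI_def,
        mul_assoc, mul_assoc, ← exp_add, ← exp_add]
      ring_nf
  rw [setIntegral_congr_fun measurableSet_Ioi integrand, integral_const_mul,
    integral_Ioi_mul_exp_neg_mul_sq hK, hyp2F1, ← hI_def]
  field_simp
  ring

theorem stmt_2 (α θ b lam c : ℝ) (hα : 2 < α) (hθ : 0 ≤ θ) (hb : 0 ≤ b)
    (hlam : 0 < lam) (hc : 0 < c) :
    (∫ r in Set.Ioi (0:ℝ),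
        2 * lam * π * r * Real.exp (-(lam * π * r ^ 2)) * Real.exp (-(c * π * r ^ 2)) *
          Real.exp (-(2 * lam * π *
            ∫ y in Set.Ioi r, (1 - (1 + θ * (r / y) ^ α) ^ (-b)) * y)))
      = 1 / (c / lam + hyp2F1 b α θ) :=
  stmt_2_general α θ b lam c hθ hb hlam hc
end

section
/- For α > 2, θ ≥ 0, and b ≥ 0, the inner integral satisfies 2∫_r^∞ (1 - (1 + θ(r/y)^α)^(-b)) y dy = r² (₂F₁(b, -2/α; 1 - 2/α; -θ) - 1) for every r > 0. -/
open MeasureTheory Real Set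

theorem stmt_3 (α θ b r : ℝ) (hα : 2 < α) (hθ : 0 ≤ θ) (hb : 0 ≤ b) (hr : 0 < r) :
    2 * ∫ y in Set.Ioi r, (1 - (1 + θ * (r / y) ^ α) ^ (-b)) * y
      = r ^ 2 * (hyp2F1 b α θ - 1) := by
  have key : ∫ y in Set.Ioi r, (1 - (1 + θ * (r / y) ^ α) ^ (-b)) * y
      = ∫ h in Set.Ioi (1:ℝ), (r ^ 2 / 2) * (1 - (1 + θ * h ^ (-(α/2))) ^ (-b)) := by
    set f : ℝ → ℝ := fun h => r * h ^ ((1:ℝ)/2) with hf_def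
    set f' : ℝ → ℝ := fun h => r * ((1/2) * h ^ ((1:ℝ)/2 - 1)) with hf'_def
    have himg : f '' Set.Ioi (1:ℝ) = Set.Ioi r := by
      ext y
      simp only [Set.mem_image, Set.mem_Ioi]
      constructor
      · rintro ⟨h, h1, rfl⟩
        have : (1:ℝ) < h ^ ((1:ℝ)/2) :=
          (Real.one_lt_rpow_iff_of_pos (lt_trans one_pos h1)).2 (Or.inl ⟨h1, by norm_num⟩)
        calc r = r * 1 := by ring
          _ < r * h ^ ((1:ℝ)/2) := (mul_lt_mul_iff_right₀ hr).2 this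
      · intro hy
        have hy0 : 0 < y := lt_trans hr hy
        have hyr : (0:ℝ) < y / r := div_pos hy0 hr
        refine ⟨(y / r) ^ (2:ℝ), ?_, ?_⟩
        · have : (1:ℝ) < y / r := (one_lt_div hr).2 hy
          exact (Real.one_lt_rpow_iff_of_pos hyr).2 (Or.inl ⟨this, by norm_num⟩)
        · simp only [hf_def]
          rw [← Real.rpow_mul hyr.le]
          norm_num
          field_simp
    have hderiv : ∀ x ∈ Set.Ioi (1:ℝ), HasDerivWithinAt f (f' x) (Set.Ioi 1) x := by
      intro x hx
      have hx0 : x ≠ 0 := ne_of_gt (lt_trans one_pos hx)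
      exact ((Real.hasDerivAt_rpow_const (Or.inl hx0)).const_mul r).hasDerivWithinAt
    have hinj : Set.InjOn f (Set.Ioi 1) := by
      intro a ha c hc hac
      have ha0 : (0:ℝ) ≤ a := le_of_lt (lt_trans one_pos ha)
      have hc0 : (0:ℝ) ≤ c := le_of_lt (lt_trans one_pos hc)
      have h1 : a ^ ((1:ℝ)/2) = c ^ ((1:ℝ)/2) := by
        have := hac
        simp only [hf_def] at this
        exact mul_left_cancel₀ (ne_of_gt hr) this
      have h2 : (a ^ ((1:ℝ)/2)) ^ (2:ℝ) = (c ^ ((1:ℝ)/2)) ^ (2:ℝ) := by rw [h1]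
      rw [← Real.rpow_mul ha0, ← Real.rpow_mul hc0] at h2
      norm_num at h2
      exact h2
    have him := integral_image_eq_integral_abs_deriv_smul measurableSet_Ioi hderiv hinj
      (fun y => (1 - (1 + θ * (r / y) ^ α) ^ (-b)) * y)
    rw [himg] at him
    rw [him]
    apply setIntegral_congr_fun measurableSet_Ioi
    intro h hh
    have h0 : (0:ℝ) < h := lt_trans one_pos hh
    have hroot : (0:ℝ) < h ^ ((1:ℝ)/2) := Real.rpow_pos_of_pos h0 _
    simp only [smul_eq_mul, hf_def, hf'_def]
    have e1 : r / (r * h ^ ((1:ℝ)/2)) = h ^ (-((1:ℝ)/2)) := by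
      rw [Real.rpow_neg h0.le]
      field_simp
    have e2 : (h ^ (-((1:ℝ)/2))) ^ α = h ^ (-(α/2)) := by
      rw [← Real.rpow_mul h0.le]
      congr 1
      ring
    have e3 : h ^ ((1:ℝ)/2 - 1) = (h ^ ((1:ℝ)/2))⁻¹ := by
      rw [← Real.rpow_neg h0.le]
      norm_num
    rw [e1, e2, e3, abs_of_pos (by positivity)]
    field_simp
  rw [key, MeasureTheory.integral_const_mul]
  simp only [hyp2F1]
  ring
end

section
/- Let c₁ > 0 and set c₂ = 1/c₁. For α₁ = α₂ = α > 2 and common threshold θ ≥ 0 with F := ₂F₁(1, -2/α; 1-2/α; -θ) and G := ₂F₁(1, -2/α; 1-2/α; -θ₂), the total coverage probability M₁ = (1/G)·1/(c₁ + F) + 1/(c₂ + F) satisfies M₁ ≤ 1, with equality iff θ = θ₂ = 0. -/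
/-!
For `θ ≥ 0` the integrand `1 - (1 + θ h^(-α/2))⁻¹ = t / (1 + t)` (with `t = θ h^(-α/2)`) is
nonnegative, and positive everywhere on `(1, ∞)` when `θ > 0`; since `α > 2` it is integrable,
so `F, G ≥ 1` with equality exactly at threshold `0`. The coverage `M₁` is antitone in `F` and `G`,
strictly so in each, and at `F = G = 1` it equals `1/(c + 1) + 1/(1/c + 1) = 1`.
-/

open MeasureTheory Real Set

lemma one_sub_one_add_rpow_neg_one {t : ℝ} (ht : 0 ≤ t) :
    1 - (1 + t) ^ (-(1 : ℝ)) = t / (1 + t) := by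
  rw [rpow_neg_one]
  field_simp
  ring

section Integrand

variable {α θ : ℝ}

lemma hyp2F1_one_integrand_nonneg (hθ : 0 ≤ θ) {h : ℝ} (hh : 0 < h) :
    0 ≤ 1 - (1 + θ * h ^ (-(α / 2))) ^ (-(1 : ℝ)) := by
  have ht : 0 ≤ θ * h ^ (-(α / 2)) := by positivity
  rw [one_sub_one_add_rpow_neg_one ht]
  positivity

lemma hyp2F1_one_integrand_pos (hθ : 0 < θ) {h : ℝ} (hh : 0 < h) :
    0 < 1 - (1 + θ * h ^ (-(α / 2))) ^ (-(1 : ℝ)) := by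
  have ht : 0 < θ * h ^ (-(α / 2)) := by positivity
  rw [one_sub_one_add_rpow_neg_one ht.le]
  positivity

lemma integrableOn_hyp2F1_one_integrand (hα : 2 < α) (hθ : 0 ≤ θ) :
    IntegrableOn (fun h : ℝ ↦ 1 - (1 + θ * h ^ (-(α / 2))) ^ (-(1 : ℝ))) (Ioi 1) := by
  have hdom : IntegrableOn (fun h : ℝ ↦ θ * h ^ (-(α / 2))) (Ioi 1) :=
    (integrableOn_Ioi_rpow_of_lt (by linarith) one_pos).const_mul θ
  refine hdom.mono' (Measurable.aestronglyMeasurable (by fun_prop)) ?_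
  filter_upwards [ae_restrict_mem measurableSet_Ioi] with h hh
  have hh0 : (0 : ℝ) < h := one_pos.trans hh
  have ht : 0 ≤ θ * h ^ (-(α / 2)) := by positivity
  rw [norm_of_nonneg (hyp2F1_one_integrand_nonneg hθ hh0), one_sub_one_add_rpow_neg_one ht]
  exact div_le_self ht (by linarith)

end Integrand

lemma one_le_hyp2F1_one (α : ℝ) {θ : ℝ} (hθ : 0 ≤ θ) : 1 ≤ hyp2F1 1 α θ :=
  le_add_of_nonneg_right <| setIntegral_nonneg measurableSet_Ioi fun _ hh ↦
    hyp2F1_one_integrand_nonneg hθ (one_pos.trans hh)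

lemma one_lt_hyp2F1_one {α θ : ℝ} (hα : 2 < α) (hθ : 0 < θ) : 1 < hyp2F1 1 α θ := by
  refine lt_add_of_pos_right 1 ?_
  rw [setIntegral_pos_iff_support_of_nonneg_ae ?_ (integrableOn_hyp2F1_one_integrand hα hθ.le)]
  · have hsupp : Ioi 1 ⊆ Function.support fun h : ℝ ↦ 1 - (1 + θ * h ^ (-(α / 2))) ^ (-(1 : ℝ)) :=
      fun h hh ↦ (hyp2F1_one_integrand_pos hθ (one_pos.trans hh)).ne'
    simp [inter_eq_right.mpr hsupp]
  · filter_upwards [ae_restrict_mem measurableSet_Ioi] with h hh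
    exact hyp2F1_one_integrand_nonneg hθ.le (one_pos.trans hh)

lemma hyp2F1_one_eq_one_iff {α θ : ℝ} (hα : 2 < α) (hθ : 0 ≤ θ) :
    hyp2F1 1 α θ = 1 ↔ θ = 0 := by
  refine ⟨fun h ↦ ?_, fun h ↦ by simp [hyp2F1, h]⟩
  by_contra hne
  exact (one_lt_hyp2F1_one hα (hθ.lt_of_ne' hne)).ne' h

noncomputable def totalCoverage (c F G : ℝ) : ℝ := 1 / G * (1 / (c + F)) + 1 / (1 / c + F)

section TotalCoverage

variable {c F G : ℝ}

lemma totalCoverage_one_one (hc : 0 < c) : totalCoverage c 1 1 = 1 := by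
  unfold totalCoverage
  field_simp
  ring

lemma totalCoverage_le_one (hc : 0 < c) (hF : 1 ≤ F) (hG : 1 ≤ G) : totalCoverage c F G ≤ 1 := by
  rw [← totalCoverage_one_one hc]
  unfold totalCoverage
  gcongr

lemma totalCoverage_lt_one (hc : 0 < c) (hF : 1 ≤ F) (hG : 1 ≤ G) (h : 1 < F ∨ 1 < G) :
    totalCoverage c F G < 1 := by
  rw [← totalCoverage_one_one hc]
  unfold totalCoverage
  rcases h with hF₁ | hG₁
  · have : 1 / G ≤ 1 := div_le_one_of_le₀ hG (zero_le_one.trans hG)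
    exact add_lt_add_of_le_of_lt (by gcongr) (by gcongr)
  · have : 1 / G < 1 := (div_lt_one (by linarith)).mpr hG₁
    exact add_lt_add_of_lt_of_le
      ((mul_lt_mul_of_pos_right this (by positivity)).trans_le (by gcongr; norm_num)) (by gcongr)

lemma totalCoverage_eq_one_iff (hc : 0 < c) (hF : 1 ≤ F) (hG : 1 ≤ G) :
    totalCoverage c F G = 1 ↔ F = 1 ∧ G = 1 := by
  refine ⟨fun h ↦ ?_, by rintro ⟨rfl, rfl⟩; exact totalCoverage_one_one hc⟩
  by_contra hne
  refine (totalCoverage_lt_one hc hF hG ?_).ne h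
  rw [not_and_or] at hne
  exact hne.imp (hF.lt_of_ne' ·) (hG.lt_of_ne' ·)

end TotalCoverage

theorem stmt_18 (α θ θ₂ c₁ c₂ : ℝ) (hα : 2 < α) (hθ : 0 ≤ θ) (hθ₂ : 0 ≤ θ₂)
    (hc₁ : 0 < c₁) (hc₂ : c₂ = 1 / c₁) :
    1 / hyp2F1 1 α θ₂ * (1 / (c₁ + hyp2F1 1 α θ)) + 1 / (c₂ + hyp2F1 1 α θ) ≤ 1 ∧
    (1 / hyp2F1 1 α θ₂ * (1 / (c₁ + hyp2F1 1 α θ)) + 1 / (c₂ + hyp2F1 1 α θ) = 1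
      ↔ θ = 0 ∧ θ₂ = 0) := by
  subst hc₂
  have hF := one_le_hyp2F1_one α hθ
  have hG := one_le_hyp2F1_one α hθ₂
  refine ⟨totalCoverage_le_one hc₁ hF hG, ?_⟩
  rw [← hyp2F1_one_eq_one_iff hα hθ, ← hyp2F1_one_eq_one_iff hα hθ₂]
  exact totalCoverage_eq_one_iff hc₁ hF hG
end
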